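/- arXiv:2102.00268 — 7 statements merged into one kernel-verified Lean document; each statement's English description precedes it below -/
import Mathlib

section
/- Let A be a co-hereditary graph property (the complement of a hereditary property, i.e., if G ∈ A and G is an induced subgraph of H, then H ∈ A). Let G be a graph on n vertices and let c_k denote the number of vertex subsets S of size k with G[S] ∈ A. Then for all k with 0 ≤ k < n/2, c_k ≤ c_{k+1}. -/
/-! Since `A` is closed upwards, adding a vertex to a `k`-set in `A` gives a `(k+1)`-set in `A`: the
upper shadow of the `k`-slice of the family lies in its `(k+1)`-slice. The upward local LYM inequality
`#𝒜 * (n - k) ≤ #(∂⁺ 𝒜) * (k + 1)`, the downward one applied to complements, then shows that the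
upper shadow is no smaller than the slice as soon as `k + 1 ≤ n - k`. -/

open Finset
open scoped FinsetFamily

namespace Finset

variable {α : Type*} [DecidableEq α] [Fintype α] {𝒜 : Finset (Finset α)} {r : ℕ}

theorem card_mul_le_card_upShadow_mul (h𝒜 : (𝒜 : Set (Finset α)).Sized r) :
    #𝒜 * (Fintype.card α - r) ≤ #(∂⁺ 𝒜) * (r + 1) := by
  have h𝒜c : (𝒜ᶜˢ : Set (Finset α)).Sized (Fintype.card α - r) := by
    intro s hs
    rw [mem_coe, mem_compls] at hs
    have := card_compl s
    have := h𝒜 hs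
    have := card_le_univ s
    omega
  have h := card_mul_le_card_shadow_mul h𝒜c
  rw [shadow_compls, card_compls, card_compls] at h
  obtain hr | hr := le_or_gt r (Fintype.card α)
  · rwa [Nat.sub_sub_self hr] at h
  · simp [Nat.sub_eq_zero_of_le hr.le]

theorem card_le_card_upShadow (h𝒜 : (𝒜 : Set (Finset α)).Sized r)
    (hr : 2 * r < Fintype.card α) : #𝒜 ≤ #(∂⁺ 𝒜) :=
  Nat.le_of_mul_le_mul_right
    ((Nat.mul_le_mul_left _ (by omega)).trans (card_mul_le_card_upShadow_mul h𝒜)) r.succ_pos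

theorem upShadow_slice_subset_slice_succ (h𝒜 : IsUpperSet (𝒜 : Set (Finset α))) :
    ∂⁺ (𝒜 # r) ⊆ 𝒜 # (r + 1) := by
  intro t ht
  obtain ⟨s, hs, a, ha, rfl⟩ := mem_upShadow_iff.1 ht
  rw [mem_slice] at hs ⊢
  exact ⟨h𝒜 (subset_insert a s) hs.1, by rw [card_insert_of_notMem ha, hs.2]⟩

theorem _root_.IsUpperSet.card_slice_le_card_slice_succ (h𝒜 : IsUpperSet (𝒜 : Set (Finset α)))
    (hr : 2 * r < Fintype.card α) : #(𝒜 # r) ≤ #(𝒜 # (r + 1)) :=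
  (card_le_card_upShadow sized_slice hr).trans
    (card_le_card (upShadow_slice_subset_slice_succ h𝒜))

end Finset

/-- For a co-hereditary graph property `A` (closed under taking
graphs in which a member embeds as an induced subgraph) and a graph `G` on `n`
vertices, with `c k` the number of `k`-subsets `S` with `G[S] ∈ A`, we have
`c k ≤ c (k+1)` for all `k < n/2`. -/
theorem stmt_0 {V : Type} [Fintype V] (G : SimpleGraph V)
    (A : ∀ ⦃α : Type⦄, SimpleGraph α → Prop)
    (hA : ∀ ⦃α β : Type⦄ (H : SimpleGraph α) (H' : SimpleGraph β),
      Nonempty (H ↪g H') → A H → A H')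
    (c : ℕ → ℕ)
    (hc : ∀ k, c k = Nat.card {S : Finset V // S.card = k ∧ A (G.induce (S : Set V))})
    (k : ℕ) (hk : 2 * k < Fintype.card V) :
    c k ≤ c (k + 1) := by
  classical
  set 𝒜 : Finset (Finset V) := univ.filter fun S => A (G.induce (S : Set V))
  have h𝒜 : IsUpperSet (𝒜 : Set (Finset V)) := fun S T hST hS => by
    simp only [𝒜, coe_filter, mem_univ, true_and, Set.mem_ofPred_eq] at hS ⊢
    exact hA _ _ ⟨G.induceHomOfLE (coe_subset.2 hST)⟩ hS
  have hc𝒜 : ∀ j, c j = #(𝒜 # j) := fun j => by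
    rw [hc, Nat.card_eq_fintype_card, Fintype.card_subtype, slice, filter_filter]
    simp only [and_comm]
  simpa only [hc𝒜] using h𝒜.card_slice_le_card_slice_succ hk
end

section
/- Let A be a co-hereditary graph property, G a graph of order n, and c_i the number of i-element vertex subsets inducing a graph in A. If k ≥ n/2 and c_k / C(n,k) ≥ (n−k)/(k+1), then c_i ≥ c_{i+1} for all i with k ≤ i < n. -/
open Finset

/-- For a co-hereditary graph property `A` and a graph `G` of order `n`,
if `k ≥ n/2` and `c k / C(n,k) ≥ (n-k)/(k+1)`, then `c i ≥ c (i+1)` for `k ≤ i < n`. -/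
theorem stmt_2 {V : Type} [Fintype V] (G : SimpleGraph V)
    (A : ∀ ⦃α : Type⦄, SimpleGraph α → Prop)
    (hA : ∀ ⦃α β : Type⦄ (H : SimpleGraph α) (H' : SimpleGraph β),
      Nonempty (H ↪g H') → A H → A H')
    (c : ℕ → ℕ)
    (hc : ∀ k, c k = Nat.card {S : Finset V // S.card = k ∧ A (G.induce (S : Set V))})
    (k : ℕ) (hk : Fintype.card V ≤ 2 * k)
    (hratio : ((Fintype.card V : ℝ) - k) / ((k : ℝ) + 1) ≤
      (c k : ℝ) / ((Fintype.card V).choose k : ℝ)) :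
    ∀ i, k ≤ i → i < Fintype.card V → c (i + 1) ≤ c i := by
  classical
  set n := Fintype.card V with hn
  set 𝒜 : ℕ → Finset (Finset V) :=
    fun i => univ.filter (fun S : Finset V => S.card = i ∧ A (G.induce (S : Set V))) with h𝒜
  have hcF : ∀ i, c i = (𝒜 i).card := by
    intro i
    rw [hc, Nat.card_eq_fintype_card, Fintype.card_subtype]
  -- upward closure
  have hup : ∀ S T : Finset V, S ⊆ T → A (G.induce (S : Set V)) → A (G.induce (T : Set V)) := by
    intro S T hST h
    exact hA _ _ ⟨SimpleGraph.induceHomOfLE G (by exact_mod_cast hST)⟩ h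
  -- key counting step : (n - i) * c i ≤ (i + 1) * c (i + 1)
  have hstep : ∀ i, c i * (n - i) ≤ c (i + 1) * (i + 1) := by
    intro i
    rw [hcF, hcF]
    have := Finset.card_nsmul_le_card_nsmul (R := ℕ) (· ⊆ ·) (s := 𝒜 i) (t := 𝒜 (i + 1))
      (m := n - i) (n := i + 1) ?_ ?_
    · simpa [smul_eq_mul] using this
    · intro S hS
      simp only [h𝒜, mem_filter, mem_univ, true_and] at hS
      have hsub : (Sᶜ).image (fun a => insert a S) ⊆ (𝒜 (i + 1)).bipartiteAbove (· ⊆ ·) S := by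
        intro T hT
        obtain ⟨a, ha, rfl⟩ := mem_image.mp hT
        rw [mem_compl] at ha
        refine (mem_bipartiteAbove _).mpr ⟨?_, subset_insert _ _⟩
        simp only [h𝒜, mem_filter, mem_univ, true_and]
        exact ⟨by rw [card_insert_of_notMem ha, hS.1], hup _ _ (subset_insert _ _) hS.2⟩
      calc n - i = (Sᶜ).card := by rw [card_compl, hS.1]
        _ = ((Sᶜ).image (fun a => insert a S)).card := by
            refine (card_image_of_injOn ?_).symm
            intro a ha b hb hab
            rw [mem_coe, mem_compl] at ha
            exact (insert_inj ha).mp hab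
        _ ≤ _ := card_le_card hsub
    · intro T hT
      simp only [h𝒜, mem_filter, mem_univ, true_and] at hT
      have hsub : (𝒜 i).bipartiteBelow (· ⊆ ·) T ⊆ T.powersetCard i := by
        intro S hS
        rw [mem_bipartiteBelow _] at hS
        simp only [h𝒜, mem_filter, mem_univ, true_and] at hS
        exact mem_powersetCard.mpr ⟨hS.2, hS.1.1⟩
      calc ((𝒜 i).bipartiteBelow (· ⊆ ·) T).card ≤ (T.powersetCard i).card := card_le_card hsub
        _ = (i + 1).choose i := by rw [card_powersetCard, hT.1]
        _ = i + 1 := Nat.choose_succ_self_right i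
  -- monotonicity of densities
  have hmono : ∀ i, k ≤ i → i ≤ n → c k * n.choose i ≤ c i * n.choose k := by
    intro i hki
    induction i, hki using Nat.le_induction with
    | base => intro _; exact le_rfl
    | succ i hki ih =>
      intro hin1
      have hin : i ≤ n := le_trans (Nat.le_succ i) hin1
      have h5 := ih hin
      have key := Nat.choose_succ_right_eq n i
      have chain : c k * n.choose (i + 1) * (i + 1) ≤ c (i + 1) * n.choose k * (i + 1) := by
        calc c k * n.choose (i + 1) * (i + 1) = c k * (n.choose (i + 1) * (i + 1)) := by ring
          _ = c k * n.choose i * (n - i) := by rw [key]; ring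
          _ ≤ c i * n.choose k * (n - i) := mul_le_mul_left h5 _
          _ = c i * (n - i) * n.choose k := by ring
          _ ≤ c (i + 1) * (i + 1) * n.choose k := mul_le_mul_left (hstep i) _
          _ = c (i + 1) * n.choose k * (i + 1) := by ring
      exact Nat.le_of_mul_le_mul_right chain (Nat.succ_pos i)
  -- trivial upper bound
  have hub : ∀ j, c j ≤ n.choose j := by
    intro j
    rw [hcF]
    calc (𝒜 j).card ≤ (univ.powersetCard j (α := V)).card := by
          refine card_le_card ?_
          intro S hS
          simp only [h𝒜, mem_filter, mem_univ, true_and] at hS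
          exact mem_powersetCard.mpr ⟨subset_univ S, hS.1⟩
      _ = n.choose j := by rw [card_powersetCard, card_univ]
  -- finish in ℝ
  intro i hki hin
  have hkn : k ≤ n := le_trans hki (le_of_lt hin)
  have hin1 : i + 1 ≤ n := hin
  have hP : (0 : ℝ) < n.choose i := by
    exact_mod_cast Nat.choose_pos (le_trans (Nat.le_succ i) hin1)
  have hQ : (0 : ℝ) < n.choose k := by exact_mod_cast Nat.choose_pos hkn
  have hR : (0 : ℝ) < n.choose (i + 1) := by exact_mod_cast Nat.choose_pos hin1
  have hk1 : (0 : ℝ) < (k : ℝ) + 1 := by positivity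
  have hi1 : (0 : ℝ) < (i : ℝ) + 1 := by positivity
  have f1 : (c (i + 1) : ℝ) ≤ n.choose (i + 1) := by exact_mod_cast hub (i + 1)
  have f2 : ((i : ℝ) + 1) * n.choose (i + 1) = ((n : ℝ) - i) * n.choose i := by
    have h' := congrArg (Nat.cast (R := ℝ)) (Nat.choose_succ_right_eq n i)
    push_cast [Nat.cast_sub hin.le] at h'
    linear_combination h'
  have f3 : ((n : ℝ) - i) * ((k : ℝ) + 1) ≤ ((n : ℝ) - k) * ((i : ℝ) + 1) := by
    have hki' : (k : ℝ) ≤ i := by exact_mod_cast hki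
    have hn0 : (0 : ℝ) ≤ n := by positivity
    nlinarith
  have f4 : ((n : ℝ) - k) * n.choose k ≤ (c k : ℝ) * ((k : ℝ) + 1) := by
    rw [div_le_div_iff₀ hk1 hQ] at hratio
    linarith
  have f5 : (c k : ℝ) * n.choose i ≤ (c i : ℝ) * n.choose k := by
    exact_mod_cast hmono i hki (le_of_lt hin)
  have main : (c (i + 1) : ℝ) * (((i : ℝ) + 1) * (((k : ℝ) + 1) * n.choose k)) ≤
      (c i : ℝ) * (((i : ℝ) + 1) * (((k : ℝ) + 1) * n.choose k)) := by
    calc (c (i + 1) : ℝ) * (((i : ℝ) + 1) * (((k : ℝ) + 1) * n.choose k))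
        ≤ (n.choose (i + 1) : ℝ) * (((i : ℝ) + 1) * (((k : ℝ) + 1) * n.choose k)) := by
          apply mul_le_mul_of_nonneg_right f1; positivity
      _ = (((i : ℝ) + 1) * n.choose (i + 1)) * (((k : ℝ) + 1) * n.choose k) := by ring
      _ = (((n : ℝ) - i) * n.choose i) * (((k : ℝ) + 1) * n.choose k) := by rw [f2]
      _ = (((n : ℝ) - i) * ((k : ℝ) + 1)) * ((n.choose i : ℝ) * n.choose k) := by ring
      _ ≤ (((n : ℝ) - k) * ((i : ℝ) + 1)) * ((n.choose i : ℝ) * n.choose k) := by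
          apply mul_le_mul_of_nonneg_right f3; positivity
      _ = (((n : ℝ) - k) * n.choose k) * (((i : ℝ) + 1) * n.choose i) := by ring
      _ ≤ ((c k : ℝ) * ((k : ℝ) + 1)) * (((i : ℝ) + 1) * n.choose i) := by
          apply mul_le_mul_of_nonneg_right f4; positivity
      _ = ((c k : ℝ) * n.choose i) * (((i : ℝ) + 1) * ((k : ℝ) + 1)) := by ring
      _ ≤ ((c i : ℝ) * n.choose k) * (((i : ℝ) + 1) * ((k : ℝ) + 1)) := by
          apply mul_le_mul_of_nonneg_right f5; positivity
      _ = (c i : ℝ) * (((i : ℝ) + 1) * (((k : ℝ) + 1) * n.choose k)) := by ring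
  have : (c (i + 1) : ℝ) ≤ c i := le_of_mul_le_mul_right main (by positivity)
  exact_mod_cast this
end

section
/- Let A be a co-hereditary graph property and G a graph of order n such that for k = ⌈n/2⌉ one has c_k / C(n,k) ≥ (n−k)/(k+1). Then the sequence c_0, c_1, ..., c_n is unimodal with mode ⌈n/2⌉, i.e., c_i ≤ c_{i+1} for i < ⌈n/2⌉ and c_i ≥ c_{i+1} for i ≥ ⌈n/2⌉. -/
/-!
A co-hereditary property makes the family `𝒜` of vertex sets `S` with `A (G[S])` an upper set,
so `c i = #(𝒜 # i)` and the upper-shadow form of the local LYM inequality gives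
`c i * (n - i) ≤ c (i + 1) * (i + 1)`. Below `⌈n/2⌉` this already forces `c i ≤ c (i + 1)`.
It also says that the density `c i / C(n, i)` is nondecreasing, so for `i ≥ k = ⌈n/2⌉` the
hypothesis gives `c i ≥ C(n, i) (n - k) / (k + 1) ≥ C(n, i) (n - i) / (i + 1) = C(n, i + 1)`,
which bounds `c (i + 1)`.
-/

open Finset
open scoped FinsetFamily

namespace Finset

variable {α : Type*} [DecidableEq α] [Fintype α] {𝒜 : Finset (Finset α)} {r : ℕ}

theorem card_slice_mul_le_card_slice_succ_mul (h𝒜 : IsUpperSet (𝒜 : Set (Finset α))) :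
    #(𝒜 # r) * (Fintype.card α - r) ≤ #(𝒜 # (r + 1)) * (r + 1) :=
  (card_mul_le_card_upShadow_mul sized_slice).trans <|
    Nat.mul_le_mul_right _ (card_le_card (upShadow_slice_subset_slice_succ h𝒜))

end Finset

section LocalLYMSequence

variable {n i : ℕ} {c : ℕ → ℕ}

lemma le_succ_of_mul_sub_le (hc : c i * (n - i) ≤ c (i + 1) * (i + 1)) (hi : i + 1 ≤ n - i) :
    c i ≤ c (i + 1) :=
  Nat.le_of_mul_le_mul_right ((Nat.mul_le_mul_left _ hi).trans hc) i.succ_pos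

lemma div_choose_le_div_choose_succ (hc : c i * (n - i) ≤ c (i + 1) * (i + 1)) (hi : i < n) :
    (c i : ℝ) / n.choose i ≤ c (i + 1) / n.choose (i + 1) := by
  rw [div_le_div_iff₀ (mod_cast Nat.choose_pos hi.le) (mod_cast Nat.choose_pos hi)]
  have : c i * n.choose (i + 1) ≤ c (i + 1) * n.choose i := by
    refine Nat.le_of_mul_le_mul_right ?_ i.succ_pos
    calc c i * n.choose (i + 1) * (i + 1) = c i * (n - i) * n.choose i := by
          rw [mul_assoc, Nat.choose_succ_right_eq]; ring
      _ ≤ c (i + 1) * (i + 1) * n.choose i := Nat.mul_le_mul_right _ hc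
      _ = c (i + 1) * n.choose i * (i + 1) := by ring
  exact_mod_cast this

lemma monotoneOn_div_choose (hc : ∀ i, c i * (n - i) ≤ c (i + 1) * (i + 1)) :
    MonotoneOn (fun i ↦ (c i : ℝ) / n.choose i) (Set.Iic n) :=
  monotoneOn_of_le_add_one Set.ordConnected_Iic fun i _ _ hi ↦
    div_choose_le_div_choose_succ (hc i) hi

lemma succ_le_of_le_div_choose (hc : ∀ i, c i * (n - i) ≤ c (i + 1) * (i + 1))
    (hcn : ∀ i, c i ≤ n.choose i) {k : ℕ} (hki : k ≤ i) (hin : i < n)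
    (hk : ((n : ℝ) - k) / (k + 1) ≤ c k / n.choose k) : c (i + 1) ≤ c i := by
  have hpos : (0 : ℝ) < n.choose i := mod_cast Nat.choose_pos hin.le
  have hchoose : (n.choose (i + 1) : ℝ) = n.choose i * ((n - i) / (i + 1)) := by
    rw [← mul_div_assoc, eq_div_iff (by positivity), ← Nat.cast_sub hin.le]
    exact_mod_cast Nat.choose_succ_right_eq n i
  have hratio : ((n : ℝ) - i) / (i + 1) ≤ (n - k) / (k + 1) := by
    rw [div_le_div_iff₀ (by positivity) (by positivity)]
    have : (k : ℝ) ≤ i := mod_cast hki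
    nlinarith
  have hdens : (c k : ℝ) / n.choose k ≤ c i / n.choose i :=
    monotoneOn_div_choose hc (Set.mem_Iic.2 (hki.trans hin.le)) (Set.mem_Iic.2 hin.le) hki
  have : (c (i + 1) : ℝ) ≤ c i := calc
    (c (i + 1) : ℝ) ≤ n.choose (i + 1) := mod_cast hcn (i + 1)
    _ = n.choose i * ((n - i) / (i + 1)) := hchoose
    _ ≤ n.choose i * (c i / n.choose i) :=
      mul_le_mul_of_nonneg_left (hratio.trans (hk.trans hdens)) hpos.le
    _ = c i := mul_div_cancel₀ _ hpos.ne'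
  exact_mod_cast this

end LocalLYMSequence

/-- For a co-hereditary graph property `A` and a graph `G` of order `n`,
if for `k = ⌈n/2⌉` one has `c k / C(n,k) ≥ (n-k)/(k+1)`, then the sequence
`c 0, ..., c n` is unimodal with mode `⌈n/2⌉`. -/
theorem stmt_3 {V : Type} [Fintype V] (G : SimpleGraph V)
    (A : ∀ ⦃α : Type⦄, SimpleGraph α → Prop)
    (hA : ∀ ⦃α β : Type⦄ (H : SimpleGraph α) (H' : SimpleGraph β),
      Nonempty (H ↪g H') → A H → A H')
    (c : ℕ → ℕ)
    (hc : ∀ k, c k = Nat.card {S : Finset V // S.card = k ∧ A (G.induce (S : Set V))})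
    (hratio : ((Fintype.card V : ℝ) - ((Fintype.card V + 1) / 2 : ℕ)) /
        (((Fintype.card V + 1) / 2 : ℕ) + 1 : ℝ) ≤
      (c ((Fintype.card V + 1) / 2) : ℝ) /
        ((Fintype.card V).choose ((Fintype.card V + 1) / 2) : ℝ)) :
    (∀ i < (Fintype.card V + 1) / 2, c i ≤ c (i + 1)) ∧
    (∀ i, (Fintype.card V + 1) / 2 ≤ i → i < Fintype.card V → c (i + 1) ≤ c i) := by
  classical
  set 𝒜 : Finset (Finset V) := {S | A (G.induce (S : Set V))}
  have h𝒜 : IsUpperSet (𝒜 : Set (Finset V)) := fun S T hST hS ↦ by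
    simp only [𝒜, coe_filter, mem_univ, true_and, Set.mem_ofPred_eq] at hS ⊢
    exact hA _ _ ⟨SimpleGraph.induceHomOfLE G (coe_subset.2 hST)⟩ hS
  have hc𝒜 : ∀ i, c i = #(𝒜 # i) := fun i ↦ by
    rw [hc, Nat.card_eq_fintype_card, Fintype.card_subtype]
    simp [𝒜, slice, filter_filter, and_comm]
  have hloc : ∀ i, c i * (Fintype.card V - i) ≤ c (i + 1) * (i + 1) := fun i ↦ by
    simpa only [hc𝒜] using card_slice_mul_le_card_slice_succ_mul h𝒜
  have hcn : ∀ i, c i ≤ (Fintype.card V).choose i := fun i ↦ by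
    simpa only [hc𝒜] using sized_slice.card_le
  exact ⟨fun i hi ↦ le_succ_of_mul_sub_le (hloc i) (by omega),
    fun i hki hin ↦ succ_le_of_le_div_choose hloc hcn hki hin hratio⟩
end

section
/- Let A be a co-hereditary graph property and G a graph of order n such that every vertex subset S with |S| = ⌈n/2⌉ satisfies G[S] ∈ A. Then the sequence c_0, ..., c_n of counts of i-subsets inducing graphs in A is unimodal with mode ⌈n/2⌉. -/
open Finset

/-- Inclusion of induced subgraphs. -/
def embOfSubset {V : Type} (G : SimpleGraph V) {s t : Set V} (h : s ⊆ t) :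
    G.induce s ↪g G.induce t :=
  ⟨⟨Set.inclusion h, Set.inclusion_injective h⟩, Iff.rfl⟩

/-- For a co-hereditary graph property `A` and a graph `G` of order `n`
such that every vertex subset of size `⌈n/2⌉` induces a graph in `A`, the sequence
`c 0, ..., c n` is unimodal with mode `⌈n/2⌉`. -/
theorem stmt_4 {V : Type} [Fintype V] (G : SimpleGraph V)
    (A : ∀ ⦃α : Type⦄, SimpleGraph α → Prop)
    (hA : ∀ ⦃α β : Type⦄ (H : SimpleGraph α) (H' : SimpleGraph β),
      Nonempty (H ↪g H') → A H → A H')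
    (c : ℕ → ℕ)
    (hc : ∀ k, c k = Nat.card {S : Finset V // S.card = k ∧ A (G.induce (S : Set V))})
    (hmid : ∀ S : Finset V, S.card = (Fintype.card V + 1) / 2 → A (G.induce (S : Set V))) :
    (∀ i < (Fintype.card V + 1) / 2, c i ≤ c (i + 1)) ∧
    (∀ i, (Fintype.card V + 1) / 2 ≤ i → i < Fintype.card V → c (i + 1) ≤ c i) := by
  classical
  set n := Fintype.card V with hn
  set m := (n + 1) / 2 with hm
  -- co-hereditary for finsets
  have hsub : ∀ {S T : Finset V}, S ⊆ T → A (G.induce (S : Set V)) → A (G.induce (T : Set V)) :=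
    fun {S T} h hS => hA _ _ ⟨embOfSubset G (by exact_mod_cast h)⟩ hS
  -- all sets of size ≥ m are in A
  have hbig : ∀ S : Finset V, m ≤ S.card → A (G.induce (S : Set V)) := by
    intro S hS
    obtain ⟨T, hTS, hT⟩ := Finset.exists_subset_card_eq hS
    exact hsub hTS (hmid T hT)
  -- c in terms of filters
  have hc' : ∀ k, c k = #({S : Finset V | S.card = k ∧ A (G.induce (S : Set V))} : Finset _) := by
    intro k
    rw [hc k, Nat.card_eq_fintype_card, Fintype.card_subtype]
  -- key double counting inequality (for any i, counting A-sets of size i vs i+1)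
  have key : ∀ i : ℕ,
      c i * (n - i) ≤ c (i + 1) * (i + 1) := by
    intro i
    rw [hc' i, hc' (i + 1)]
    apply Finset.card_mul_le_card_mul (fun S T => S ⊆ T)
    · intro S hS
      simp only [Finset.mem_filter, Finset.mem_univ, true_and] at hS
      have : (Sᶜ.image (fun v => insert v S)) ⊆
          ({T : Finset V | T.card = i + 1 ∧ A (G.induce (T : Set V))} : Finset _).bipartiteAbove
            (fun S T => S ⊆ T) S := by
        intro T hT
        simp only [Finset.mem_image, Finset.mem_compl] at hT
        obtain ⟨v, hv, rfl⟩ := hT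
        simp only [Finset.mem_bipartiteAbove, Finset.mem_filter, Finset.mem_univ, true_and]
        exact ⟨⟨by rw [Finset.card_insert_of_notMem hv, hS.1],
          hsub (Finset.subset_insert v S) hS.2⟩, Finset.subset_insert v S⟩
      calc n - i = #Sᶜ := by rw [Finset.card_compl, hS.1]
        _ = #(Sᶜ.image (fun v => insert v S)) := by
            rw [Finset.card_image_of_injOn]
            intro a ha b hb hab
            by_contra hne
            have : a ∈ insert b S := by rw [show insert b S = insert a S from hab.symm]; exact Finset.mem_insert_self a S
            rcases Finset.mem_insert.1 this with h | h
            · exact hne h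
            · exact (Finset.mem_compl.1 ha) h
        _ ≤ _ := Finset.card_le_card this
    · intro T hT
      simp only [Finset.mem_filter, Finset.mem_univ, true_and] at hT
      have : ({S : Finset V | S.card = i ∧ A (G.induce (S : Set V))} : Finset _).bipartiteBelow
          (fun S T => S ⊆ T) T ⊆ T.powersetCard i := by
        intro S hS
        simp only [Finset.mem_bipartiteBelow, Finset.mem_filter, Finset.mem_univ, true_and] at hS
        exact Finset.mem_powersetCard.2 ⟨hS.2, hS.1.1⟩
      calc #(_) ≤ #(T.powersetCard i) := Finset.card_le_card this
        _ = (i + 1).choose i := by rw [Finset.card_powersetCard, hT.1]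
        _ = i + 1 := Nat.choose_succ_self_right i
  -- reverse double counting for the decreasing part
  have key2 : ∀ i : ℕ, m ≤ i →
      c (i + 1) * (i + 1) ≤ c i * (n - i) := by
    intro i hi
    rw [hc' i, hc' (i + 1)]
    apply Finset.card_mul_le_card_mul (fun T S => S ⊆ T)
    · intro T hT
      simp only [Finset.mem_filter, Finset.mem_univ, true_and] at hT
      have hsubset : T.powersetCard i ⊆
          ({S : Finset V | S.card = i ∧ A (G.induce (S : Set V))} : Finset _).bipartiteAbove
            (fun T S => S ⊆ T) T := by
        intro S hS
        rw [Finset.mem_powersetCard] at hS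
        simp only [Finset.mem_bipartiteAbove, Finset.mem_filter, Finset.mem_univ, true_and]
        exact ⟨⟨hS.2, hbig S (hS.2 ▸ hi)⟩, hS.1⟩
      calc i + 1 = (i + 1).choose i := (Nat.choose_succ_self_right i).symm
        _ = #(T.powersetCard i) := by rw [Finset.card_powersetCard, hT.1]
        _ ≤ _ := Finset.card_le_card hsubset
    · intro S hS
      simp only [Finset.mem_filter, Finset.mem_univ, true_and] at hS
      have : ({T : Finset V | T.card = i + 1 ∧ A (G.induce (T : Set V))} : Finset _).bipartiteBelow
          (fun T S => S ⊆ T) S ⊆ Sᶜ.image (fun v => insert v S) := by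
        intro T hT
        simp only [Finset.mem_bipartiteBelow, Finset.mem_filter, Finset.mem_univ, true_and] at hT
        obtain ⟨⟨hTc, _⟩, hST⟩ := hT
        have : ∃ v ∈ T, v ∉ S := by
          by_contra h
          push_neg at h
          have := Finset.card_le_card h
          omega
        obtain ⟨v, hvT, hvS⟩ := this
        refine Finset.mem_image.2 ⟨v, Finset.mem_compl.2 hvS, ?_⟩
        apply Finset.eq_of_subset_of_card_le
        · exact Finset.insert_subset hvT hST
        · rw [Finset.card_insert_of_notMem hvS, hS.1, hTc]
      calc #(_) ≤ #(Sᶜ.image (fun v => insert v S)) := Finset.card_le_card this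
        _ ≤ #Sᶜ := Finset.card_image_le
        _ = n - i := by rw [Finset.card_compl, hS.1]
  constructor
  · intro i hi
    have h1 : i + 1 ≤ n - i := by omega
    have h2 : 0 < n - i := by omega
    have h3 : c i * (n - i) ≤ c (i + 1) * (n - i) :=
      le_trans (key i) (Nat.mul_le_mul_left _ h1)
    exact Nat.le_of_mul_le_mul_right h3 h2
  · intro i hi hin
    have h1 : n - i ≤ i + 1 := by omega
    have := key2 i hi
    have h3 : c (i + 1) * (i + 1) ≤ c i * (i + 1) :=
      le_trans this (Nat.mul_le_mul_left _ h1)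
    exact Nat.le_of_mul_le_mul_right h3 (Nat.succ_pos i)
end

section
/- There is no graph property A (a class of graphs closed under isomorphism) such that for all graphs G and all i ≤ |V(G)|, the number of i-element vertex subsets S with G[S] ∈ A equals the number of i-element dominating sets of G. -/
/-- Any two graphs on a subsingleton type are isomorphic. -/
lemma subsingleton_iso {α : Type} [Subsingleton α] (G H : SimpleGraph α) :
    Nonempty (G ≃g H) := by
  refine ⟨⟨Equiv.refl α, ?_⟩⟩
  intro a b
  have : a = b := Subsingleton.elim a b
  subst this
  simp

/-- There is no graph property `A` (closed under isomorphism) such that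
for every graph `G` and every `i ≤ |V(G)|`, the number of `i`-subsets `S` with
`G[S] ∈ A` equals the number of `i`-element dominating sets of `G`. -/
theorem stmt_6 :
    ¬ ∃ A : ∀ ⦃α : Type⦄, SimpleGraph α → Prop,
      (∀ ⦃α β : Type⦄ (H : SimpleGraph α) (H' : SimpleGraph β),
        Nonempty (H ≃g H') → (A H ↔ A H')) ∧
      ∀ (V : Type) (_ : Fintype V) (G : SimpleGraph V) (i : ℕ), i ≤ Fintype.card V →
        Nat.card {S : Finset V // S.card = i ∧ A (G.induce (S : Set V))} =
          Nat.card {S : Finset V // S.card = i ∧ ∀ v : V, v ∈ S ∨ ∃ u ∈ S, G.Adj u v} := by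
  rintro ⟨A, hiso, hcount⟩
  have h1 := hcount (Fin 2) inferInstance ⊤ 1 (by simp)
  have h2 := hcount (Fin 2) inferInstance ⊥ 1 (by simp)
  have hsub : ∀ S : Finset (Fin 2), S.card = 1 → Subsingleton ((S : Set (Fin 2)) : Type) := by
    intro S hc
    obtain ⟨a, rfl⟩ := Finset.card_eq_one.mp hc
    exact ⟨fun x y => Subtype.ext (by
      have hx := x.2; have hy := y.2
      simp only [Finset.coe_singleton, Set.mem_singleton_iff] at hx hy
      rw [hx, hy])⟩
  have hA : Nat.card {S : Finset (Fin 2) // S.card = 1 ∧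
        A ((⊤ : SimpleGraph (Fin 2)).induce (S : Set (Fin 2)))} =
      Nat.card {S : Finset (Fin 2) // S.card = 1 ∧
        A ((⊥ : SimpleGraph (Fin 2)).induce (S : Set (Fin 2)))} := by
    apply Nat.card_congr (Equiv.subtypeEquivRight ?_)
    intro S
    constructor <;> rintro ⟨hc, hA'⟩ <;> refine ⟨hc, ?_⟩
    · haveI := hsub S hc
      exact (hiso _ _ (subsingleton_iso _ _)).mp hA'
    · haveI := hsub S hc
      exact (hiso _ _ (subsingleton_iso _ _)).mp hA'
  have hd1 : Nat.card {S : Finset (Fin 2) // S.card = 1 ∧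
      ∀ v : Fin 2, v ∈ S ∨ ∃ u ∈ S, (⊤ : SimpleGraph (Fin 2)).Adj u v} = 2 := by
    rw [Nat.card_eq_fintype_card]
    decide
  have hd2 : Nat.card {S : Finset (Fin 2) // S.card = 1 ∧
      ∀ v : Fin 2, v ∈ S ∨ ∃ u ∈ S, (⊥ : SimpleGraph (Fin 2)).Adj u v} = 0 := by
    rw [Nat.card_eq_fintype_card]
    decide
  omega
end

section
/- Let F(x) = Σ_{j=0}^{g-1} C(n,j) x^{n−j} + (C(n,g) − α) x^{n−g} + Σ_{j=g+1}^{d} a_j x^{n−j} be a real polynomial where 2 ≤ g ≤ d ≤ n, α > 0, and a_j are reals. Let R(x) be the remainder of dividing F(x) by F'(x) using quotient (x/n + 1/n). Then the leading term of R(x) is α·((n−g)/n − 1)·x^{n−g}; in particular R has degree n−g and negative leading coefficient. -/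
/-!
Write `T P = P - (X + 1) P' / n` (`derivRemainder n`), so that `R = T F`. The map `T` is
linear, does not raise degrees (its `k`-th coefficient only involves those of `P` in degrees `k`
and `k + 1`), kills `(X + 1)^n`, and sends `X^m` to `(1 - m/n) X^m` plus lower terms. Since `F`
agrees with `(X + 1)^n - α X^(n-g)` in all degrees `≥ n - g`, `R` equals
`α ((n - g)/n - 1) X^(n-g)` plus terms of lower degree, and the coefficient is negative because
`g > 0`.
-/

open Polynomial

section derivRemainder

variable {K : Type*} [Field K]

noncomputable def derivRemainder (n : ℕ) : K[X] →ₗ[K] K[X] :=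
  LinearMap.id - (n : K)⁻¹ • (LinearMap.mulLeft K (X + 1) ∘ₗ derivative)

theorem derivRemainder_apply (n : ℕ) (P : K[X]) :
    derivRemainder n P = P - C (n : K)⁻¹ * ((X + 1) * derivative P) := by
  simp [derivRemainder, smul_eq_C_mul]

theorem coeff_derivRemainder (n : ℕ) (P : K[X]) (k : ℕ) :
    (derivRemainder n P).coeff k =
      (1 - (n : K)⁻¹ * k) * P.coeff k - (n : K)⁻¹ * (k + 1) * P.coeff (k + 1) := by
  rw [derivRemainder_apply]
  cases k with
  | zero => simp [coeff_derivative]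
  | succ k =>
    simp only [coeff_sub, coeff_C_mul, add_mul, one_mul, coeff_add, coeff_X_mul, coeff_derivative]
    push_cast
    ring

theorem derivRemainder_mem_degreeLT (n m : ℕ) {P : K[X]} (hP : P ∈ degreeLT K m) :
    derivRemainder n P ∈ degreeLT K m := by
  rw [mem_degreeLT, degree_lt_iff_coeff_zero] at hP ⊢
  intro k hk
  rw [coeff_derivRemainder, hP k hk, hP (k + 1) (by omega)]
  ring

theorem derivRemainder_X_add_one_pow [CharZero K] {n : ℕ} (hn : n ≠ 0) :
    derivRemainder n ((X + 1 : K[X]) ^ n) = 0 := by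
  obtain ⟨m, rfl⟩ := Nat.exists_eq_add_one_of_ne_zero hn
  have hC : C ((↑(m + 1) : K)⁻¹) * C (↑(m + 1) : K) = 1 := by
    rw [← C_mul, inv_mul_cancel₀ (by positivity), C_1]
  rw [derivRemainder_apply, ← C_1, derivative_X_add_C_pow, Nat.add_sub_cancel]
  linear_combination -((X + C 1 : K[X]) ^ (m + 1) * hC)

theorem derivRemainder_X_pow_sub_mem_degreeLT (n m : ℕ) :
    derivRemainder n (X ^ m : K[X]) - C (1 - (n : K)⁻¹ * m) * X ^ m ∈ degreeLT K m := by
  rw [mem_degreeLT, degree_lt_iff_coeff_zero]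
  intro k hk
  simp only [coeff_sub, coeff_derivRemainder, coeff_C_mul_X_pow, coeff_X_pow]
  split_ifs <;> first | omega | (subst_vars; ring)

theorem derivRemainder_sub_C_mul_X_pow_mem_degreeLT [CharZero K] {n m : ℕ} (hn : n ≠ 0) (α : K)
    {F : K[X]} (hF : F - ((X + 1) ^ n - C α * X ^ m) ∈ degreeLT K m) :
    derivRemainder n F - C (α * ((n : K)⁻¹ * m - 1)) * X ^ m ∈ degreeLT K m := by
  have hsplit : derivRemainder n F - C (α * ((n : K)⁻¹ * m - 1)) * X ^ m =
      derivRemainder n (F - ((X + 1) ^ n - C α * X ^ m)) -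
        α • (derivRemainder n (X ^ m) - C (1 - (n : K)⁻¹ * m) * X ^ m) := by
    rw [map_sub, map_sub, derivRemainder_X_add_one_pow hn, ← smul_eq_C_mul α, map_smul]
    simp only [smul_eq_C_mul, C_mul, C_sub, C_1]
    ring
  rw [hsplit]
  exact sub_mem (derivRemainder_mem_degreeLT n m hF)
    (Submodule.smul_mem _ α (derivRemainder_X_pow_sub_mem_degreeLT n m))

end derivRemainder

theorem Finset.sum_range_succ_eq_add_add_sum_Icc {M : Type*} [AddCommMonoid M] (f : ℕ → M)
    {g n : ℕ} (hgn : g ≤ n) :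
    ∑ j ∈ range (n + 1), f j = ∑ j ∈ range g, f j + f g + ∑ j ∈ Icc (g + 1) n, f j := by
  rw [range_eq_Ico, ← sum_Ico_consecutive f (Nat.zero_le g) (by omega : g ≤ n + 1),
    sum_eq_sum_Ico_succ_bot (by omega : g < n + 1), ← add_assoc, range_eq_Ico]
  rfl

theorem X_add_one_pow_eq_sum {R : Type*} [CommSemiring R] (n : ℕ) :
    (X + 1 : R[X]) ^ n = ∑ j ∈ Finset.range (n + 1), C (n.choose j : R) * X ^ (n - j) := by
  rw [add_comm, add_pow]
  refine Finset.sum_congr rfl fun j _ => ?_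
  rw [one_pow, one_mul, mul_comm, map_natCast]

theorem sum_C_mul_X_pow_sub_mem_degreeLT {R : Type*} [Semiring R] (b : ℕ → R) {s : Finset ℕ}
    {g n : ℕ} (hs : s ⊆ Finset.Icc (g + 1) n) :
    ∑ j ∈ s, C (b j) * X ^ (n - j) ∈ degreeLT R (n - g) := by
  rw [mem_degreeLT, degree_lt_iff_coeff_zero]
  intro k hk
  rw [finsetSum_coeff]
  refine Finset.sum_eq_zero fun j hj => ?_
  have := Finset.mem_Icc.1 (hs hj)
  rw [coeff_C_mul_X_pow, if_neg (by omega)]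

theorem binomial_perturbation_sub_mem_degreeLT {R : Type*} [CommRing R] {g d n : ℕ}
    (hgd : g ≤ d) (hdn : d ≤ n) (α : R) (a : ℕ → R) :
    (∑ j ∈ Finset.range g, C (n.choose j : R) * X ^ (n - j))
        + C ((n.choose g : R) - α) * X ^ (n - g)
        + ∑ j ∈ Finset.Icc (g + 1) d, C (a j) * X ^ (n - j)
        - ((X + 1) ^ n - C α * X ^ (n - g)) ∈ degreeLT R (n - g) := by
  rw [X_add_one_pow_eq_sum, Finset.sum_range_succ_eq_add_add_sum_Icc _ (hgd.trans hdn), C_sub]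
  convert Submodule.sub_mem _
    (sum_C_mul_X_pow_sub_mem_degreeLT a (Finset.Icc_subset_Icc_right hdn))
    (sum_C_mul_X_pow_sub_mem_degreeLT (fun j => (n.choose j : R)) subset_rfl) using 1
  ring

theorem coeff_natDegree_leadingCoeff_of_sub_mem_degreeLT {R : Type*} [Ring R] {P : R[X]}
    {c : R} {m : ℕ} (h : P - C c * X ^ m ∈ degreeLT R m) (hc : c ≠ 0) :
    P.coeff m = c ∧ P.natDegree = m ∧ P.leadingCoeff = c := by
  rw [mem_degreeLT] at h
  have hdeg : (P - C c * X ^ m).degree < (C c * X ^ m).degree := by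
    rwa [degree_C_mul_X_pow m hc]
  have hP : P = C c * X ^ m + (P - C c * X ^ m) := by abel
  refine ⟨?_, ?_, ?_⟩
  · rw [hP, coeff_add, coeff_C_mul_X_pow, if_pos rfl, coeff_eq_zero_of_degree_lt h, add_zero]
  · rw [hP, natDegree_add_eq_left_of_degree_lt hdeg, natDegree_C_mul_X_pow m c hc]
  · rw [hP, leadingCoeff_add_of_degree_lt' hdeg, leadingCoeff_C_mul_X_pow]

/-- For the polynomial
`F(x) = Σ_{j<g} C(n,j) x^{n-j} + (C(n,g) - α) x^{n-g} + Σ_{j=g+1}^{d} a_j x^{n-j}`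
with `2 ≤ g ≤ d ≤ n` and `α > 0`, the remainder `R` in
`F = (x/n + 1/n)·F' + R` has leading term `α·((n-g)/n - 1)·x^{n-g}`; in
particular `deg R = n - g` and the leading coefficient of `R` is negative. -/
theorem stmt_13 (n g d : ℕ) (hg : 2 ≤ g) (hgd : g ≤ d) (hdn : d ≤ n)
    (α : ℝ) (hα : 0 < α) (a : ℕ → ℝ)
    (F R : Polynomial ℝ)
    (hF : F = (∑ j ∈ Finset.range g, C ((n.choose j : ℝ)) * X ^ (n - j))
        + C ((n.choose g : ℝ) - α) * X ^ (n - g)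
        + ∑ j ∈ Finset.Icc (g + 1) d, C (a j) * X ^ (n - j))
    (hR : F = (C ((n : ℝ)⁻¹) * X + C ((n : ℝ)⁻¹)) * (derivative F) + R) :
    R.coeff (n - g) = α * (((n : ℝ) - g) / n - 1) ∧
      R.natDegree = n - g ∧ R.leadingCoeff < 0 := by
  have hRF : R = derivRemainder n F := by
    rw [derivRemainder_apply]
    linear_combination -hR
  have hc : α * ((n : ℝ)⁻¹ * ↑(n - g) - 1) = α * (((n : ℝ) - g) / n - 1) := by
    rw [Nat.cast_sub (hgd.trans hdn), inv_mul_eq_div]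
  have hneg : α * (((n : ℝ) - g) / n - 1) < 0 := by
    refine mul_neg_of_pos_of_neg hα ?_
    rw [sub_neg, div_lt_one (Nat.cast_pos.2 (by omega))]
    have : (0 : ℝ) < g := Nat.cast_pos.2 (by omega)
    linarith
  have hmem := hc ▸ hRF ▸ derivRemainder_sub_C_mul_X_pow_mem_degreeLT (by omega) α
    (hF ▸ binomial_perturbation_sub_mem_degreeLT hgd hdn α a)
  obtain ⟨hcoeff, hdeg, hlc⟩ := coeff_natDegree_leadingCoeff_of_sub_mem_degreeLT hmem hneg.ne
  exact ⟨hcoeff, hdeg, hlc ▸ hneg⟩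
end

section
/- Let F(x) be a real polynomial of degree n ≥ 1 with positive leading coefficient, and suppose that in its Sturm sequence F_0 = F, F_1 = F', F_i = −rem(F_{i−2}, F_{i−1}), some F_i has negative leading coefficient or |deg(F_i) − deg(F_{i+1})| > 1 for some i. Then F is not real-rooted (has a non-real complex root). -/
/-!
Suppose every complex root of `F` is real and write `F = c ∏ (X - x i) ^ m i` with
`x 0 < ⋯ < x k`. With `G = ∏ (X - x i) ^ (m i - 1)` we get `F = G t` and `F' = G u`, where
`t = c ∏ (X - x i)` and `u (x i) = c m i ∏_{j ≠ i} (x i - x j)` alternates in sign along the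
roots of `t`. Such an interlacing pair `(t, u)` is carried to the interlacing pair
`(u, -(t % u))` by one Sturm step: `u` has a root `y i` between any two consecutive `x i`, and
`-(t % u)` agrees with `-t` at these roots, so it alternates in sign along them. As the Sturm
recursion commutes with multiplication by `G`, consecutive nonzero entries of the Sturm sequence
of `F` are `G t` and `G u` for an interlacing pair, so they have positive leading coefficients
and degrees differing by exactly one.
-/

open Polynomial Finset

theorem neg_one_pow_card_mul_prod_sub_pos {ι : Type*} [LinearOrder ι] (s : Finset ι)
    (x : ι → ℝ) {y : ℝ} (i : ι) (hlt : ∀ j ∈ s, j ≤ i → x j < y)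
    (hgt : ∀ j ∈ s, i < j → y < x j) :
    0 < (-1) ^ #{j ∈ s | i < j} * ∏ j ∈ s, (y - x j) := by
  rw [← prod_filter_mul_prod_filter_not s (i < ·), ← mul_assoc, ← prod_neg]
  refine mul_pos (prod_pos fun j hj => ?_) (prod_pos fun j hj => ?_)
  · rw [mem_filter] at hj
    linarith [hgt j hj.1 hj.2]
  · rw [mem_filter, not_lt] at hj
    linarith [hlt j hj.1 hj.2]

namespace Polynomial

theorem exists_root_mem_Ioo_of_eval_mul_neg (P : ℝ[X]) {a b : ℝ} (hab : a < b)
    (h : P.eval a * P.eval b < 0) : ∃ c ∈ Set.Ioo a b, P.IsRoot c := by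
  have hP : ContinuousOn (fun x => P.eval x) (Set.Icc a b) := P.continuous.continuousOn
  rcases mul_neg_iff.1 h with ⟨ha, hb⟩ | ⟨ha, hb⟩
  · exact intermediate_value_Ioo' hab.le hP ⟨hb, ha⟩
  · exact intermediate_value_Ioo hab.le hP ⟨ha, hb⟩

section Field

variable {K ι : Type*} [Field K]

theorem leadingCoeff_C_mul_prod_X_sub_C (s : Finset ι) (z : ι → K) (c : K) :
    (C c * ∏ i ∈ s, (X - C (z i))).leadingCoeff = c := by
  rw [leadingCoeff_mul, leadingCoeff_C,
    (monic_prod_of_monic _ _ fun i _ => monic_X_sub_C (z i)).leadingCoeff, mul_one]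

theorem natDegree_C_mul_prod_X_sub_C (s : Finset ι) (z : ι → K) {c : K} (hc : c ≠ 0) :
    (C c * ∏ i ∈ s, (X - C (z i))).natDegree = #s := by
  rw [natDegree_C_mul hc, natDegree_prod_of_monic _ _ fun i _ => monic_X_sub_C (z i)]
  simp

theorem eq_C_leadingCoeff_mul_prod_X_sub_C_of_isRoot {P : K[X]} (hP : P ≠ 0) {m : ℕ}
    {z : Fin m → K} (hz : Function.Injective z) (hroot : ∀ i, P.IsRoot (z i))
    (hdeg : P.natDegree ≤ m) :
    P = C P.leadingCoeff * ∏ i, (X - C (z i)) := by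
  have hle : univ.val.map z ≤ P.roots := by
    rw [Multiset.le_iff_subset (univ.nodup.map hz)]
    simpa [Multiset.subset_iff, mem_roots hP] using hroot
  have hroots : P.roots = univ.val.map z := by
    refine (Multiset.eq_of_le_of_card_le hle ?_).symm
    simpa using (card_roots' P).trans hdeg
  have hsplit : P.Splits := splits_iff_card_roots.2 <| le_antisymm (card_roots' P) <| by
    simpa [hroots] using hdeg
  conv_lhs => rw [hsplit.eq_prod_roots, hroots, Multiset.map_map]
  rfl

theorem mul_mod_mul {G : K[X]} (hG : G ≠ 0) (a b : K[X]) :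
    G * a % (G * b) = G * (a % b) := by
  rcases eq_or_ne b 0 with rfl | hb
  · simp
  rw [mod_eq_of_dvd_sub (p₂ := G * (a % b))
      ⟨a / b, by rw [EuclideanDomain.mod_eq_sub_mul_div]; ring⟩,
    mod_eq_self_iff (mul_ne_zero hG hb), degree_mul, degree_mul]
  exact WithBot.add_lt_add_left (degree_ne_bot.2 hG) (degree_mod_lt a hb)

theorem exists_strictMono_eq_prod_of_splits [LinearOrder K] {F : K[X]} (hF : F.Splits)
    (hdeg : F.natDegree ≠ 0) :
    ∃ (k : ℕ) (x : Fin (k + 1) → K) (m : Fin (k + 1) → ℕ), StrictMono x ∧ (∀ i, m i ≠ 0) ∧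
      F = C F.leadingCoeff * ∏ i, (X - C (x i)) ^ m i := by
  classical
  obtain ⟨k, hk⟩ := Nat.exists_eq_succ_of_ne_zero
    (Multiset.toFinset_nonempty.2 (hF.roots_ne_zero hdeg)).card_pos.ne'
  let x := F.roots.toFinset.orderEmbOfFin hk
  refine ⟨k, x, fun i => F.roots.count (x i), x.strictMono, fun i => Multiset.count_ne_zero.2
    (Multiset.mem_toFinset.1 (F.roots.toFinset.orderEmbOfFin_mem hk i)), ?_⟩
  conv_lhs => rw [hF.eq_prod_roots, prod_multiset_map_count,
    ← map_orderEmbOfFin_univ F.roots.toFinset hk, prod_map]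
  rfl

end Field

theorem derivative_prod_pow {R ι : Type*} [CommSemiring R] [DecidableEq ι] (s : Finset ι)
    (p : ι → R[X]) {m : ι → ℕ} (hm : ∀ i ∈ s, m i ≠ 0) :
    derivative (∏ i ∈ s, p i ^ m i) = (∏ i ∈ s, p i ^ (m i - 1)) *
      ∑ j ∈ s, C (m j : R) * derivative (p j) * ∏ i ∈ s.erase j, p i := by
  rw [derivative_prod_finset, mul_sum]
  refine sum_congr rfl fun j hj => ?_
  have herase : ∏ i ∈ s.erase j, p i ^ m i =
      (∏ i ∈ s.erase j, p i ^ (m i - 1)) * ∏ i ∈ s.erase j, p i := by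
    rw [← prod_mul_distrib]
    exact prod_congr rfl fun i hi => (pow_sub_one_mul (hm i (mem_of_mem_erase hi)) _).symm
  rw [derivative_pow, herase, ← mul_prod_erase s _ hj]
  ring

theorem splits_of_forall_aeval_eq_zero_im_eq_zero {F : ℝ[X]}
    (h : ∀ z : ℂ, aeval z F = 0 → z.im = 0) : F.Splits :=
  Splits.of_splits_map (algebraMap ℝ ℂ) (IsAlgClosed.splits _) fun z hz =>
    ⟨z.re, Complex.ext rfl (h z (by simpa using (mem_roots'.1 hz).2)).symm⟩

theorem exists_roots_between_of_alternating {k : ℕ} {x : Fin (k + 1) → ℝ} (hx : StrictMono x)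
    {Q : ℝ[X]} (hQ : Q.natDegree ≤ k)
    (hsign : ∀ i : Fin (k + 1), 0 < (-1) ^ (k - (i : ℕ)) * Q.eval (x i)) :
    ∃ y : Fin k → ℝ, StrictMono y ∧ (∀ i, x i.castSucc < y i ∧ y i < x i.succ) ∧
      0 < Q.leadingCoeff ∧ Q = C Q.leadingCoeff * ∏ i, (X - C (y i)) := by
  have hbetween : ∀ i : Fin k, ∃ c ∈ Set.Ioo (x i.castSucc) (x i.succ), Q.IsRoot c := by
    intro i
    refine exists_root_mem_Ioo_of_eval_mul_neg Q (hx i.castSucc_lt_succ) ?_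
    have hprod := mul_pos (hsign i.castSucc) (hsign i.succ)
    rw [show k - (i.castSucc : ℕ) = k - i.succ + 1 by rw [Fin.val_castSucc, Fin.val_succ]; omega]
      at hprod
    linarith [show (-1 : ℝ) ^ (k - i.succ + 1 : ℕ) * Q.eval (x i.castSucc) *
      ((-1) ^ (k - i.succ : ℕ) * Q.eval (x i.succ)) =
        -(Q.eval (x i.castSucc) * Q.eval (x i.succ)) by ring_nf; simp]
  choose y hy hroot using hbetween
  have hy_mono : StrictMono y := fun i j hij =>
    calc y i < x i.succ := (hy i).2
      _ ≤ x j.castSucc := hx.monotone (Fin.succ_le_castSucc_iff.2 hij)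
      _ < y j := (hy j).1
  have hQ0 : Q ≠ 0 := fun h => by simpa [h] using hsign 0
  have hQ_eq := eq_C_leadingCoeff_mul_prod_X_sub_C_of_isRoot hQ0 hy_mono.injective hroot hQ
  refine ⟨y, hy_mono, hy, ?_, hQ_eq⟩
  have htop := hsign (Fin.last k)
  rw [Fin.val_last, Nat.sub_self, pow_zero, one_mul, hQ_eq, eval_C_mul, eval_prod] at htop
  refine pos_of_mul_pos_left htop (prod_pos fun i _ => ?_).le
  rw [eval_sub, eval_X, eval_C, sub_pos]
  exact (hy i).2.trans_le (hx.monotone (Fin.le_last _))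

/-- The sign condition puts a root of `Q` strictly between any two consecutive roots of `P`
(`exists_roots_between_of_alternating`). -/
def Interlacing (P Q : ℝ[X]) : Prop :=
  ∃ (k : ℕ) (x : Fin (k + 1) → ℝ), StrictMono x ∧ 0 < P.leadingCoeff ∧
    P = C P.leadingCoeff * ∏ i, (X - C (x i)) ∧ Q.natDegree ≤ k ∧
    ∀ i : Fin (k + 1), 0 < (-1) ^ (k - (i : ℕ)) * Q.eval (x i)

namespace Interlacing

variable {P Q : ℝ[X]}

theorem leadingCoeff_right_pos (h : Interlacing P Q) : 0 < Q.leadingCoeff := by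
  obtain ⟨k, x, hx, -, -, hQ, hsign⟩ := h
  obtain ⟨y, -, -, hQlc, -⟩ := exists_roots_between_of_alternating hx hQ hsign
  exact hQlc

theorem natDegree_left_eq (h : Interlacing P Q) : P.natDegree = Q.natDegree + 1 := by
  obtain ⟨k, x, hx, hPlc, hP, hQ, hsign⟩ := h
  obtain ⟨y, -, -, hQlc, hQ_eq⟩ := exists_roots_between_of_alternating hx hQ hsign
  rw [hP, hQ_eq, natDegree_C_mul_prod_X_sub_C _ _ hPlc.ne',
    natDegree_C_mul_prod_X_sub_C _ _ hQlc.ne']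
  simp

theorem mod (h : Interlacing P Q) (hPQ : P % Q ≠ 0) : Interlacing Q (-(P % Q)) := by
  obtain ⟨k, x, hx, hPlc, hP, hQ, hsign⟩ := h
  obtain ⟨y, hy, hxy, hQlc, hQ_eq⟩ := exists_roots_between_of_alternating hx hQ hsign
  obtain ⟨n, rfl⟩ : ∃ n, k = n + 1 := by
    refine Nat.exists_eq_succ_of_ne_zero fun hk => hPQ ?_
    subst hk
    rw [hQ_eq, Fin.prod_univ_zero, mul_one]
    exact EuclideanDomain.mod_eq_zero.2 (isUnit_C.2 hQlc.ne'.isUnit).dvd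
  have hQdeg : Q.natDegree = n + 1 := by
    rw [hQ_eq, natDegree_C_mul_prod_X_sub_C _ _ hQlc.ne', card_univ, Fintype.card_fin]
  refine ⟨n, y, hy, hQlc, hQ_eq, ?_, fun i => ?_⟩
  · rw [natDegree_neg]
    have := natDegree_mod_lt P (q := Q) (by omega)
    omega
  have hQy : Q.eval (y i) = 0 := by
    rw [hQ_eq, eval_C_mul, eval_prod, prod_eq_zero (mem_univ i) (by simp), mul_zero]
  -- `x i.succ, …, x (n + 1)` are the `n - i + 1` roots of `P` above `y i`
  have hPy := neg_one_pow_card_mul_prod_sub_pos univ x (y := y i) i.castSucc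
    (fun j _ hj => (hx.monotone hj).trans_lt (hxy i).1)
    (fun j _ hj => (hxy i).2.trans_le (hx.monotone (Fin.castSucc_lt_iff_succ_le.1 hj)))
  rw [filter_lt_eq_Ioi, Fin.card_Ioi, Fin.val_castSucc,
    show n + 1 + 1 - 1 - (i : ℕ) = n - i + 1 by omega] at hPy
  rw [EuclideanDomain.mod_eq_sub_mul_div, eval_neg, eval_sub, eval_mul, hQy, zero_mul, sub_zero,
    hP, eval_C_mul, eval_prod]
  simp only [eval_sub, eval_X, eval_C]
  linarith [mul_pos hPlc hPy, show (-1 : ℝ) ^ (n - i : ℕ) * -(P.leadingCoeff * ∏ j, (y i - x j)) =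
    P.leadingCoeff * ((-1) ^ (n - i + 1 : ℕ) * ∏ j, (y i - x j)) by ring]

end Interlacing

theorem interlacing_derivative_of_eq_prod {k : ℕ} {x : Fin (k + 1) → ℝ} (hx : StrictMono x)
    {m : Fin (k + 1) → ℕ} (hm : ∀ i, m i ≠ 0) {c : ℝ} (hc : 0 < c) :
    ∃ u, derivative (C c * ∏ i, (X - C (x i)) ^ m i) =
      (∏ i, (X - C (x i)) ^ (m i - 1)) * u ∧ Interlacing (C c * ∏ i, (X - C (x i))) u := by
  classical
  refine ⟨C c * ∑ j, C (m j : ℝ) * ∏ i ∈ univ.erase j, (X - C (x i)), ?_, k, x, hx, ?_, ?_, ?_,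
    fun i => ?_⟩
  · rw [derivative_C_mul, derivative_prod_pow _ _ fun i _ => hm i]
    simp only [derivative_X_sub_C, mul_one]
    ring
  · rwa [leadingCoeff_C_mul_prod_X_sub_C]
  · rw [leadingCoeff_C_mul_prod_X_sub_C]
  · refine (natDegree_C_mul_le _ _).trans (natDegree_sum_le_of_forall_le _ _ fun j _ => ?_)
    refine (natDegree_C_mul_le _ _).trans ?_
    rw [natDegree_prod_of_monic _ _ fun i _ => monic_X_sub_C (x i)]
    simp
  have hsign := neg_one_pow_card_mul_prod_sub_pos (univ.erase i) x i
    (fun j hj hji => hx (lt_of_le_of_ne hji (ne_of_mem_erase hj)))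
    (fun j _ hij => hx hij)
  rw [filter_erase, erase_eq_of_notMem (by simp), filter_lt_eq_Ioi, Fin.card_Ioi,
    show k + 1 - 1 - (i : ℕ) = k - i by omega] at hsign
  rw [eval_C_mul, eval_finsetSum, sum_eq_single i]
  · simp only [eval_mul, eval_C, eval_prod, eval_sub, eval_X]
    have hmi : (0 : ℝ) < m i := Nat.cast_pos.2 (Nat.pos_of_ne_zero (hm i))
    linarith [mul_pos hc (mul_pos hmi hsign), show (-1 : ℝ) ^ (k - i : ℕ) *
      (c * (m i * ∏ j ∈ univ.erase i, (x i - x j))) =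
        c * (m i * ((-1) ^ (k - i : ℕ) * ∏ j ∈ univ.erase i, (x i - x j))) by ring]
  · intro j _ hji
    rw [eval_mul, eval_prod, prod_eq_zero (mem_erase.2 ⟨hji.symm, mem_univ i⟩) (by simp),
      mul_zero]
  · simp

theorem exists_interlacing_of_splits {F : ℝ[X]} (hF : F.Splits) (hdeg : F.natDegree ≠ 0)
    (hlead : 0 < F.leadingCoeff) :
    ∃ G t u, G.Monic ∧ F = G * t ∧ derivative F = G * u ∧ Interlacing t u := by
  obtain ⟨k, x, m, hx, hm, hF_eq⟩ := exists_strictMono_eq_prod_of_splits hF hdeg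
  generalize F.leadingCoeff = c at hF_eq hlead
  subst hF_eq
  obtain ⟨u, hu, htu⟩ := interlacing_derivative_of_eq_prod hx hm hlead
  refine ⟨∏ i, (X - C (x i)) ^ (m i - 1), _, u,
    monic_prod_of_monic _ _ fun i _ => (monic_X_sub_C _).pow _, ?_, hu, htu⟩
  rw [mul_left_comm, ← prod_mul_distrib]
  simp only [pow_sub_one_mul (hm _)]

theorem sturm_eq_mul_interlacing {s : ℕ → ℝ[X]} (hs : ∀ i, s (i + 2) = -(s i % s (i + 1)))
    {G t u : ℝ[X]} (hG : G ≠ 0) (h0 : s 0 = G * t) (h1 : s 1 = G * u) (htu : Interlacing t u)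
    (i : ℕ) (hne : ∀ j ≤ i + 1, s j ≠ 0) :
    ∃ t u, s i = G * t ∧ s (i + 1) = G * u ∧ Interlacing t u := by
  induction i with
  | zero => exact ⟨t, u, h0, h1, htu⟩
  | succ i ih =>
    obtain ⟨t, u, hi, hi1, htu⟩ := ih fun j hj => hne j (by omega)
    have hi2 : s (i + 2) = G * -(t % u) := by rw [hs, hi, hi1, mul_mod_mul hG, mul_neg]
    refine ⟨u, -(t % u), hi1, hi2, htu.mod fun h => hne (i + 2) le_rfl ?_⟩
    rw [hi2, h, neg_zero, mul_zero]

end Polynomial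

/-- Let `F` be a real polynomial of degree `n ≥ 1` with positive
leading coefficient and let `s` be its Sturm sequence: `s 0 = F`, `s 1 = F'`,
`s (i+2) = -(s i % s (i+1))` (relevant while the entries are nonzero). If some
entry of the (nonzero part of the) sequence has negative leading coefficient, or
two consecutive entries have degrees differing by more than 1, then `F` is not
real-rooted. -/
theorem stmt_14 (F : Polynomial ℝ) (hdeg : 1 ≤ F.natDegree) (hlead : 0 < F.leadingCoeff)
    (s : ℕ → Polynomial ℝ)
    (hs0 : s 0 = F) (hs1 : s 1 = Polynomial.derivative F)
    (hs : ∀ i, s (i + 2) = -(s i % s (i + 1)))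
    (hbad : ∃ i,
      ((∀ j ≤ i, s j ≠ 0) ∧ (s i).leadingCoeff < 0) ∨
      ((∀ j ≤ i + 1, s j ≠ 0) ∧
        1 < |((s i).natDegree : ℤ) - ((s (i + 1)).natDegree : ℤ)|)) :
    ∃ z : ℂ, Polynomial.aeval z F = 0 ∧ z.im ≠ 0 := by
  by_contra! hreal
  obtain ⟨G, t₀, u₀, hG, hFt, hFu, htu₀⟩ := exists_interlacing_of_splits
    (splits_of_forall_aeval_eq_zero_im_eq_zero hreal) (by omega) hlead
  have hpair := sturm_eq_mul_interlacing hs hG.ne_zero (hs0 ▸ hFt) (hs1 ▸ hFu) htu₀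
  obtain ⟨i, ⟨hne, hneg⟩ | ⟨hne, hgap⟩⟩ := hbad
  · cases i with
    | zero => exact hneg.not_gt (hs0 ▸ hlead)
    | succ i =>
      obtain ⟨_, u, -, hu, htu⟩ := hpair i hne
      rw [hu, leadingCoeff_mul, hG.leadingCoeff, one_mul] at hneg
      exact hneg.not_gt htu.leadingCoeff_right_pos
  · obtain ⟨t, u, ht, hu, htu⟩ := hpair i hne
    have hu0 : u ≠ 0 := leadingCoeff_ne_zero.1 htu.leadingCoeff_right_pos.ne'
    have ht0 : t ≠ 0 := ne_zero_of_natDegree_gt (n := u.natDegree) (by simp [htu.natDegree_left_eq])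
    rw [ht, hu, hG.natDegree_mul' ht0, hG.natDegree_mul' hu0, htu.natDegree_left_eq] at hgap
    norm_num at hgap
end
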